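/- Let Ω ⊂ ℝ^d be a bounded open set with Lipschitz boundary, and let μ, ν ∈ C²(Ω̄) be positive functions satisfying Δ log ν = β(c ν − α) and Δ log μ = β(c μ − ΔV) in Ω, where β, c, α > 0, ΔV ≥ α in Ω, and ν ≤ μ on ∂Ω. Then ν ≤ μ in Ω. -/

import Mathlib

open Filter Topology

noncomputable def eLaplacian {d : ℕ} (f : EuclideanSpace ℝ (Fin d) → ℝ)
    (x : EuclideanSpace ℝ (Fin d)) : ℝ :=
  ∑ i : Fin d,
    fderiv ℝ (fun y => fderiv ℝ f y (EuclideanSpace.single i 1)) x (EuclideanSpace.single i 1)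

/-! If `w := log ν - log μ` were positive somewhere in `Ω`, then, being `≤ 0` on `∂Ω`, it would
attain a positive maximum at an interior point `z`, where `Δw z ≤ 0`. But subtracting the two
equations gives `Δw = βc(ν - μ) + β(ΔV - α)`, and `w z > 0` means `ν z > μ z`, so `Δw z > 0`. -/

theorem ContDiffAt.differentiableAt_fderiv_apply {𝕜 E F : Type*} [NontriviallyNormedField 𝕜]
    [NormedAddCommGroup E] [NormedSpace 𝕜 E] [NormedAddCommGroup F] [NormedSpace 𝕜 F]
    {f : E → F} {x : E} (hf : ContDiffAt 𝕜 2 f x) (v : E) :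
    DifferentiableAt 𝕜 (fun y => fderiv 𝕜 f y v) x :=
  ((hf.fderiv_right (m := 1) (by norm_num)).differentiableAt one_ne_zero).clm_apply
    (differentiableAt_const v)

theorem IsLocalMax.deriv_deriv_nonpos {f : ℝ → ℝ} {a : ℝ} (hmax : IsLocalMax f a)
    (hf : ContinuousAt f a) : deriv (deriv f) a ≤ 0 := by
  by_contra! hpos
  -- a local minimum and maximum at once, so `f` is locally constant at `a`
  have hmin : IsLocalMin f a := isLocalMin_of_deriv_deriv_pos hpos hmax.deriv_eq_zero hf
  have hconst : f =ᶠ[𝓝 a] fun _ => f a :=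
    (hmin.and hmax).mono fun _ hx => le_antisymm hx.2 hx.1
  have hderiv : deriv f =ᶠ[𝓝 a] fun _ => 0 :=
    hconst.eventuallyEq_nhds.mono fun _ hx => by rw [hx.deriv_eq, deriv_const]
  rw [hderiv.deriv_eq, deriv_const] at hpos
  exact hpos.false

theorem IsLocalMax.fderiv_fderiv_apply_self_nonpos {E : Type*} [NormedAddCommGroup E]
    [NormedSpace ℝ E] {f : E → ℝ} {z : E} (hmax : IsLocalMax f z) (hf : ContDiffAt ℝ 2 f z)
    (v : E) : fderiv ℝ (fun y => fderiv ℝ f y v) z v ≤ 0 := by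
  have hline : ∀ t : ℝ, HasDerivAt (fun s : ℝ => z + s • v) v t := fun t => by
    simpa using ((hasDerivAt_id t).smul_const v).const_add z
  have hline0 : Tendsto (fun s : ℝ => z + s • v) (𝓝 0) (𝓝 z) := by
    simpa using (hline 0).continuousAt.tendsto
  have hderiv : deriv (fun t : ℝ => f (z + t • v)) =ᶠ[𝓝 0]
      fun t => fderiv ℝ f (z + t • v) v := by
    have hdiff : ∀ᶠ y in 𝓝 z, DifferentiableAt ℝ f y :=
      (hf.eventually (by simp)).mono fun _ hy => hy.differentiableAt (by norm_num)
    exact (hline0.eventually hdiff).mono fun t ht =>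
      (ht.hasFDerivAt.comp_hasDerivAt t (hline t)).deriv
  have hsecond : HasDerivAt (fun t : ℝ => fderiv ℝ f (z + t • v) v)
      (fderiv ℝ (fun y => fderiv ℝ f y v) z v) 0 := by
    have hG : HasFDerivAt (fun y => fderiv ℝ f y v) (fderiv ℝ (fun y => fderiv ℝ f y v) z)
        (z + (0 : ℝ) • v) := by
      simpa using (hf.differentiableAt_fderiv_apply v).hasFDerivAt
    exact hG.comp_hasDerivAt 0 (hline 0)
  have hmax_line : IsLocalMax (fun t : ℝ => f (z + t • v)) 0 :=
    (hline0.eventually hmax).mono fun t ht => by simpa using ht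
  have hcont_line : ContinuousAt (fun t : ℝ => f (z + t • v)) 0 := by
    simpa [ContinuousAt, Function.comp_def] using hf.continuousAt.tendsto.comp hline0
  rw [← hsecond.deriv, ← hderiv.deriv_eq]
  exact hmax_line.deriv_deriv_nonpos hcont_line

theorem IsLocalMax.eLaplacian_nonpos {d : ℕ} {f : EuclideanSpace ℝ (Fin d) → ℝ}
    {z : EuclideanSpace ℝ (Fin d)} (hmax : IsLocalMax f z) (hf : ContDiffAt ℝ 2 f z) :
    eLaplacian f z ≤ 0 :=
  Finset.sum_nonpos fun _ _ => hmax.fderiv_fderiv_apply_self_nonpos hf _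

theorem eLaplacian_sub {d : ℕ} {f g : EuclideanSpace ℝ (Fin d) → ℝ}
    {x : EuclideanSpace ℝ (Fin d)} (hf : ContDiffAt ℝ 2 f x) (hg : ContDiffAt ℝ 2 g x) :
    eLaplacian (fun y => f y - g y) x = eLaplacian f x - eLaplacian g x := by
  rw [eLaplacian, eLaplacian, eLaplacian, ← Finset.sum_sub_distrib]
  refine Finset.sum_congr rfl fun i _ => ?_
  set e := EuclideanSpace.single i (1 : ℝ)
  have hfirst : (fun y => fderiv ℝ (fun y => f y - g y) y e)
      =ᶠ[𝓝 x] fun y => fderiv ℝ f y e - fderiv ℝ g y e := by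
    filter_upwards [hf.eventually (by simp), hg.eventually (by simp)] with y hfy hgy
    rw [fderiv_fun_sub (hfy.differentiableAt (by norm_num)) (hgy.differentiableAt (by norm_num))]
    rfl
  rw [hfirst.fderiv_eq, fderiv_fun_sub (hf.differentiableAt_fderiv_apply e)
    (hg.differentiableAt_fderiv_apply e)]
  rfl

theorem IsOpen.exists_isLocalMax_pos_of_nonpos_on_frontier {X : Type*} [PseudoMetricSpace X]
    [ProperSpace X] {Ω : Set X} (hΩo : IsOpen Ω) (hΩb : Bornology.IsBounded Ω) {w : X → ℝ}
    (hw : ContinuousOn w (closure Ω)) (hfr : ∀ x ∈ frontier Ω, w x ≤ 0) {x₀ : X} (hx₀ : x₀ ∈ Ω)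
    (hpos : 0 < w x₀) : ∃ z ∈ Ω, IsLocalMax w z ∧ 0 < w z := by
  obtain ⟨z, hz, hzmax⟩ :=
    hΩb.isCompact_closure.exists_isMaxOn ⟨x₀, subset_closure hx₀⟩ hw
  have hwz : 0 < w z := hpos.trans_le (hzmax (subset_closure hx₀))
  have hzΩ : z ∈ Ω := by
    by_contra hzΩ
    have hzfr : z ∈ frontier Ω := by
      rw [frontier, hΩo.interior_eq]
      exact ⟨hz, hzΩ⟩
    exact (hfr z hzfr).not_gt hwz
  exact ⟨z, hzΩ, mem_of_superset (hΩo.mem_nhds hzΩ) fun y hy => hzmax (subset_closure hy), hwz⟩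

theorem stmt14_general (d : ℕ) (β c α : ℝ) (hβ : 0 < β) (hc : 0 < c)
    (Ω : Set (EuclideanSpace ℝ (Fin d))) (hΩo : IsOpen Ω) (hΩb : Bornology.IsBounded Ω)
    (μ ν V : EuclideanSpace ℝ (Fin d) → ℝ)
    (hμc : ContinuousOn μ (closure Ω)) (hνc : ContinuousOn ν (closure Ω))
    (hμ2 : ContDiffOn ℝ 2 μ Ω) (hν2 : ContDiffOn ℝ 2 ν Ω)
    (hμpos : ∀ x ∈ closure Ω, 0 < μ x) (hνpos : ∀ x ∈ closure Ω, 0 < ν x)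
    (heqν : ∀ x ∈ Ω, eLaplacian (fun y => Real.log (ν y)) x = β * (c * ν x - α))
    (heqμ : ∀ x ∈ Ω, eLaplacian (fun y => Real.log (μ y)) x = β * (c * μ x - eLaplacian V x))
    (hΔV : ∀ x ∈ Ω, α ≤ eLaplacian V x)
    (hbdry : ∀ x ∈ frontier Ω, ν x ≤ μ x) :
    ∀ x ∈ Ω, ν x ≤ μ x := by
  intro x₀ hx₀
  by_contra! hlt
  have hfr : ∀ x ∈ frontier Ω, Real.log (ν x) - Real.log (μ x) ≤ 0 := fun x hx => by
    have hxc := frontier_subset_closure hx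
    linarith [Real.log_le_log (hνpos x hxc) (hbdry x hx)]
  have hw : ContinuousOn (fun y => Real.log (ν y) - Real.log (μ y)) (closure Ω) :=
    (hνc.log fun y hy => (hνpos y hy).ne').sub (hμc.log fun y hy => (hμpos y hy).ne')
  obtain ⟨z, hz, hzmax, hwz⟩ := hΩo.exists_isLocalMax_pos_of_nonpos_on_frontier hΩb hw hfr hx₀
    (by linarith [Real.log_lt_log (hμpos x₀ (subset_closure hx₀)) hlt])
  have hzc := subset_closure hz
  have hμν : μ z < ν z := (Real.log_lt_log_iff (hμpos z hzc) (hνpos z hzc)).1 (by linarith)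
  have hlogν := (hν2.contDiffAt (hΩo.mem_nhds hz)).log (hνpos z hzc).ne'
  have hlogμ := (hμ2.contDiffAt (hΩo.mem_nhds hz)).log (hμpos z hzc).ne'
  have hΔw := hzmax.eLaplacian_nonpos (hlogν.sub hlogμ)
  rw [eLaplacian_sub hlogν hlogμ, heqν z hz, heqμ z hz] at hΔw
  nlinarith [mul_pos hβ (mul_pos hc (sub_pos.2 hμν)), hΔV z hz]

theorem stmt14 (d : ℕ) (β c α : ℝ) (hβ : 0 < β) (hc : 0 < c) (hα : 0 < α)
    (Ω : Set (EuclideanSpace ℝ (Fin d))) (hΩo : IsOpen Ω) (hΩb : Bornology.IsBounded Ω)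
    (μ ν V : EuclideanSpace ℝ (Fin d) → ℝ)
    (hμc : ContinuousOn μ (closure Ω)) (hνc : ContinuousOn ν (closure Ω))
    (hμ2 : ContDiffOn ℝ 2 μ Ω) (hν2 : ContDiffOn ℝ 2 ν Ω) (hV : ContDiffOn ℝ 2 V Ω)
    (hμpos : ∀ x ∈ closure Ω, 0 < μ x) (hνpos : ∀ x ∈ closure Ω, 0 < ν x)
    (heqν : ∀ x ∈ Ω, eLaplacian (fun y => Real.log (ν y)) x = β * (c * ν x - α))
    (heqμ : ∀ x ∈ Ω, eLaplacian (fun y => Real.log (μ y)) x = β * (c * μ x - eLaplacian V x))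
    (hΔV : ∀ x ∈ Ω, α ≤ eLaplacian V x)
    (hbdry : ∀ x ∈ frontier Ω, ν x ≤ μ x) :
    ∀ x ∈ Ω, ν x ≤ μ x :=
  stmt14_general d β c α hβ hc Ω hΩo hΩb μ ν V hμc hνc hμ2 hν2 hμpos hνpos heqν heqμ hΔV hbdry
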